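/- Let G be a finite simple graph with vertex set V and edge set E, let β be real, and let u, v ∈ V. Then Σ_{σ : V → {−1,+1}} σ_u σ_v exp(β Σ_{ij ∈ E} σ_i σ_j) = 2^{|V|} (cosh β)^{|E|} Σ_{A ∈ S_{u,v}} (tanh β)^{|A|}, where for u ≠ v, S_{u,v} = {A ⊆ E : the set of vertices of odd degree in the spanning subgraph (V,A) is exactly {u,v}}, and S_{v,v} = {A ⊆ E : (V,A) has no vertex of odd degree}. -/

import Mathlib

attribute [local instance] Classical.propDecidable

/-- For an Ising spin configuration `σ : V → {−1,+1}` (encoded as `V → ℤˣ`), the value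
`σ_i σ_j` on an (unordered) edge `{i,j}`. -/
def edgeTerm {V : Type*} (σ : V → ℤˣ) : Sym2 V → ℤ :=
  Sym2.lift ⟨fun i j => ((σ i * σ j : ℤˣ) : ℤ), fun i j => by simp [mul_comm]⟩

/-- The degree of the vertex `x` in the spanning subgraph `(V, A)`. -/
noncomputable def subDeg {V : Type*} (A : Finset (Sym2 V)) (x : V) : ℕ :=
  (A.filter fun e => x ∈ e).card

/-- `S_{u,v}`: the subsets `A` of the edge set of `G` whose set of odd-degree vertices in the
spanning subgraph `(V, A)` is exactly `{u, v}` when `u ≠ v`, and is empty when `u = v`. -/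
noncomputable def defectSets {V : Type*} [Fintype V] (G : SimpleGraph V)
    [DecidableRel G.Adj] (u v : V) : Finset (Finset (Sym2 V)) :=
  G.edgeFinset.powerset.filter fun A =>
    ∀ x, (Odd (subDeg A x) ↔ ((x = u ∨ x = v) ∧ u ≠ v))

/-! Since `σ_i σ_j = ±1`, `exp (β σ_i σ_j) = cosh β (1 + σ_i σ_j tanh β)`, and expanding the
product over the edges writes the Boltzmann weight as
`cosh β ^ |E| * Σ_{A ⊆ E} tanh β ^ |A| * ∏_{ij ∈ A} σ_i σ_j`. In each term,
`σ_u σ_v ∏_{ij ∈ A} σ_i σ_j = ∏_x σ_x ^ (deg_A x + [x = u] + [x = v])`, so the sum over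
configurations factorises over the vertices, and `Σ_{s = ±1} s ^ n` is `2` for even `n` and `0`
for odd `n`: exactly the `A ∈ S_{u,v}` survive, each with weight `2 ^ |V|`. -/

open Finset

theorem sum_units_int_pow (m : ℕ) : ∑ s : ℤˣ, (s : ℤ) ^ m = if Even m then 2 else 0 := by
  rw [show (univ : Finset ℤˣ) = {1, -1} by decide, sum_pair (by decide)]
  rcases Nat.even_or_odd m with hm | hm
  · simp [hm.neg_one_pow, hm]
  · simp [hm.neg_one_pow, Nat.not_even_iff_odd.2 hm]

theorem exp_mul_eq_cosh_mul_one_add_mul_tanh {t : ℝ} (ht : t = 1 ∨ t = -1) (β : ℝ) :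
    Real.exp (β * t) = Real.cosh β * (1 + t * Real.tanh β) := by
  rw [mul_add, mul_one, Real.tanh_eq_sinh_div_cosh, mul_left_comm,
    mul_div_cancel₀ _ (Real.cosh_pos β).ne']
  rcases ht with rfl | rfl
  · rw [mul_one, one_mul, Real.cosh_add_sinh]
  · rw [mul_neg_one, neg_one_mul, ← sub_eq_add_neg, Real.cosh_sub_sinh]

theorem exp_mul_sum_eq_sum_powerset {ι : Type*} (s : Finset ι) {t : ι → ℝ}
    (ht : ∀ i ∈ s, t i = 1 ∨ t i = -1) (β : ℝ) :
    Real.exp (β * ∑ i ∈ s, t i) =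
      Real.cosh β ^ s.card * ∑ A ∈ s.powerset, Real.tanh β ^ A.card * ∏ i ∈ A, t i := by
  rw [mul_sum, Real.exp_sum,
    prod_congr rfl fun i hi => exp_mul_eq_cosh_mul_one_add_mul_tanh (ht i hi) β,
    prod_mul_distrib, prod_const, prod_one_add]
  simp_rw [mul_comm (t _), prod_mul_distrib, prod_const]

theorem edgeTerm_eq_one_or_neg_one {V : Type*} (σ : V → ℤˣ) (e : Sym2 V) :
    edgeTerm σ e = 1 ∨ edgeTerm σ e = -1 := by
  induction e using Sym2.ind with
  | _ i j => exact Int.isUnit_iff.mp (σ i * σ j).isUnit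

theorem even_ite_add_ite_add_iff {V : Type*} (d : ℕ) (x u v : V) :
    Even ((if x = u then 1 else 0) + (if x = v then 1 else 0) + d) ↔
      (Odd d ↔ (x = u ∨ x = v) ∧ u ≠ v) := by
  rw [Nat.even_iff, Nat.odd_iff]
  rcases eq_or_ne u v with rfl | huv
  · by_cases hxu : x = u <;> simp [hxu]
  · by_cases hxu : x = u <;> by_cases hxv : x = v <;> simp [hxu, hxv, huv, huv.symm] <;> omega

section SpinSums

variable {V : Type*} [Fintype V]

theorem sum_prod_units_int_pow [DecidableEq V] (n : V → ℕ) :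
    ∑ σ : V → ℤˣ, ∏ x, (σ x : ℤ) ^ n x =
      if ∀ x, Even (n x) then 2 ^ Fintype.card V else 0 := by
  rw [← Fintype.prod_sum fun x (s : ℤˣ) => (s : ℤ) ^ n x]
  simp_rw [sum_units_int_pow]
  split_ifs with hn
  · simp [hn]
  · obtain ⟨x, hx⟩ := not_forall.mp hn
    exact prod_eq_zero (mem_univ x) (if_neg hx)

theorem edgeTerm_eq_prod (σ : V → ℤˣ) {e : Sym2 V} (he : ¬e.IsDiag) :
    edgeTerm σ e = ∏ x, (σ x : ℤ) ^ (if x ∈ e then 1 else 0) := by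
  induction e using Sym2.ind with
  | _ i j =>
    have hij : i ≠ j := by simpa using he
    simp_rw [pow_ite, pow_one, pow_zero]
    rw [← prod_filter, show univ.filter (· ∈ s(i, j)) = {i, j} by ext; simp, prod_pair hij]
    simp [edgeTerm]

theorem prod_edgeTerm (σ : V → ℤˣ) {A : Finset (Sym2 V)} (hA : ∀ e ∈ A, ¬e.IsDiag) :
    ∏ e ∈ A, edgeTerm σ e = ∏ x, (σ x : ℤ) ^ subDeg A x := by
  rw [prod_congr rfl fun e he => edgeTerm_eq_prod σ (hA e he), prod_comm]
  refine prod_congr rfl fun x _ => ?_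
  rw [prod_pow_eq_pow_sum, sum_boole, Nat.cast_id, subDeg]

theorem spin_mul_eq_prod (σ : V → ℤˣ) (u v : V) :
    ((σ u * σ v : ℤˣ) : ℤ) =
      ∏ x, (σ x : ℤ) ^ ((if x = u then 1 else 0) + (if x = v then 1 else 0)) := by
  simp_rw [pow_add, prod_mul_distrib, pow_ite, pow_one, pow_zero, prod_ite_eq',
    if_pos (mem_univ _), Units.val_mul]

theorem sum_spin_mul_prod_edgeTerm [DecidableEq V] (u v : V) {A : Finset (Sym2 V)}
    (hA : ∀ e ∈ A, ¬e.IsDiag) :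
    ∑ σ : V → ℤˣ, ((σ u * σ v : ℤˣ) : ℤ) * ∏ e ∈ A, edgeTerm σ e =
      if ∀ x, (Odd (subDeg A x) ↔ (x = u ∨ x = v) ∧ u ≠ v) then 2 ^ Fintype.card V else 0 := by
  simp_rw [prod_edgeTerm _ hA, spin_mul_eq_prod, ← prod_mul_distrib, ← pow_add,
    sum_prod_units_int_pow]
  exact if_congr (forall_congr' fun x => even_ite_add_ite_add_iff _ x u v) rfl rfl

end SpinSums

/-- High-temperature expansion of the Ising two-point function:
`Σ_σ σ_u σ_v exp(β Σ_{ij∈E} σ_i σ_j) = 2^|V| (cosh β)^|E| Σ_{A ∈ S_{u,v}} (tanh β)^|A|`. -/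
theorem ising_two_point_expansion {V : Type*} [Fintype V] [DecidableEq V]
    (G : SimpleGraph V) [DecidableRel G.Adj] (β : ℝ) (u v : V) :
    ∑ σ : V → ℤˣ,
        ((σ u * σ v : ℤˣ) : ℝ) * Real.exp (β * ∑ e ∈ G.edgeFinset, (edgeTerm σ e : ℝ)) =
      2 ^ Fintype.card V * Real.cosh β ^ G.edgeFinset.card *
        ∑ A ∈ defectSets G u v, Real.tanh β ^ A.card := by
  have expansion (σ : V → ℤˣ) : Real.exp (β * ∑ e ∈ G.edgeFinset, (edgeTerm σ e : ℝ)) =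
      Real.cosh β ^ G.edgeFinset.card *
        ∑ A ∈ G.edgeFinset.powerset, Real.tanh β ^ A.card * ∏ e ∈ A, (edgeTerm σ e : ℝ) :=
    exp_mul_sum_eq_sum_powerset _ (fun e _ => mod_cast edgeTerm_eq_one_or_neg_one σ e) β
  have spin_sum : ∀ A ∈ G.edgeFinset.powerset,
      ∑ σ : V → ℤˣ, ((σ u * σ v : ℤˣ) : ℝ) * ∏ e ∈ A, (edgeTerm σ e : ℝ) =
        if ∀ x, (Odd (subDeg A x) ↔ (x = u ∨ x = v) ∧ u ≠ v) then 2 ^ Fintype.card V else 0 :=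
    fun A hA => mod_cast sum_spin_mul_prod_edgeTerm u v fun e he =>
      G.not_isDiag_of_mem_edgeSet (G.mem_edgeFinset.mp (mem_powerset.mp hA he))
  calc _ = Real.cosh β ^ G.edgeFinset.card * ∑ A ∈ G.edgeFinset.powerset, Real.tanh β ^ A.card *
          ∑ σ : V → ℤˣ, ((σ u * σ v : ℤˣ) : ℝ) * ∏ e ∈ A, (edgeTerm σ e : ℝ) := by
        simp_rw [expansion, mul_sum, mul_left_comm _ (Real.cosh β ^ _),
          mul_left_comm _ (Real.tanh β ^ _)]
        exact sum_comm
    _ = _ := by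
        rw [sum_congr rfl fun A hA => by rw [spin_sum A hA], defectSets, sum_filter, mul_sum,
          mul_sum]
        refine sum_congr rfl fun A _ => ?_
        split_ifs <;> ring
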